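/- arXiv:2604.06557 — 4 statements merged into one kernel-verified Lean document; each statement's English description precedes it below -/
import Mathlib

section
/- Let (Γ, d) be an admissible fractional Brauer graph with Nakayama map ν. Then the maps s'([h]) = s(h) and ρ'([h]) = [ρ(h)] are well defined on the set H/⟨ν⟩ of ⟨ν⟩-orbits, ρ' is a bijection of H/⟨ν⟩, and for every vertex v the set of ⟨ν⟩-orbits contained in s⁻¹(v) is a single ⟨ρ'⟩-orbit. Consequently the reduced form Γ_red = (V, H/⟨ν⟩, s', ι', ρ'), where ι'([h]) = [ι(h)], is again a ribbon graph. -/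
/-- A ribbon graph: vertices `V`, half-edges `H`, source map `s`,
fixed-point-free involution `ι`, and a permutation `ρ` whose orbits are
exactly the fibers `s⁻¹(v)`. -/
structure RibbonGraph (V H : Type*) where
  s : H → V
  ι : H → H
  ρ : Equiv.Perm H
  ι_invol : ∀ h, ι (ι h) = h
  ι_ne : ∀ h, ι h ≠ h
  s_surj : Function.Surjective s
  s_ρ : ∀ h, s (ρ h) = s h
  ρ_trans : ∀ h h', s h = s h' → ∃ k : ℤ, (ρ ^ k) h = h'

/-- An admissible fractional Brauer graph: a ribbon graph with a positive
degree function `d` satisfying the two AFBG axioms. -/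
structure AFBG (V H : Type*) extends RibbonGraph V H where
  d : V → ℤ
  d_pos : ∀ v, 0 < d v
  ax_i : ∀ h, ι ((ρ ^ d (s h)) h) = (ρ ^ d (s (ι h))) (ι h)
  ax_ii : ∀ (h : H) (n : ℤ), (ρ ^ (n * d (s h))) h ≠ ι h

/-- The setoid on `H` whose classes are the orbits of the cyclic group `⟨ν⟩`. -/
def permOrbitSetoid {H : Type*} (ν : Equiv.Perm H) : Setoid H where
  r x y := ∃ k : ℤ, (ν ^ k) x = y
  iseqv := by
    constructor
    · intro x
      exact ⟨0, rfl⟩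
    · rintro x y ⟨k, hk⟩
      refine ⟨-k, ?_⟩
      rw [← hk, ← Equiv.Perm.mul_apply, ← zpow_add]
      simp
    · rintro x y z ⟨k, hk⟩ ⟨l, hl⟩
      refine ⟨l + k, ?_⟩
      rw [← hl, ← hk, ← Equiv.Perm.mul_apply, ← zpow_add]

/-!
Since `s` is `ρ`-invariant, the Nakayama map acts on each fibre `s⁻¹(v)` as the power `ρ ^ d v`;
in particular it commutes with `ρ`, and axiom (i) says exactly that it commutes with `ι`.
Every permutation commuting with `ν` permutes the `⟨ν⟩`-orbits, and this is a group homomorphism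
from the centralizer of `ν`, so `ρ` and `ι` descend to `H/⟨ν⟩` together with all their powers.
Transitivity of `ρ` on the fibres of `s` then passes to the quotient, and axiom (ii) says that
`ι h` never lies in the `⟨ν⟩`-orbit of `h`, so the induced involution has no fixed points.
-/

namespace Equiv.Perm

variable {α β : Type*}

theorem apply_zpow_apply_eq_of_forall_apply_eq {f : Perm α} {g : α → β}
    (hg : ∀ x, g (f x) = g x) (n : ℤ) (x : α) : g ((f ^ n) x) = g x := by
  induction n using Int.induction_on generalizing x with
  | zero => rfl
  | succ n ih => rw [zpow_add_one, mul_apply, ih, hg]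
  | pred n ih =>
    rw [zpow_sub_one, mul_apply, ih, ← hg (f⁻¹ x)]
    simp

theorem sameCycle_apply_apply_iff_of_commute {f σ : Perm α} (h : Commute σ f) {x y : α} :
    f.SameCycle (σ x) (σ y) ↔ f.SameCycle x y := by
  have hconj : σ⁻¹ * f * σ = f := by rw [mul_assoc, ← h.eq, inv_mul_cancel_left]
  simpa only [hconj, inv_inv] using (sameCycle_conj (g := σ⁻¹) (f := f) (x := x) (y := y)).symm

def centralizerToOrbitPerm (f : Perm α) :
    Subgroup.centralizer {f} →* Perm (Quotient (permOrbitSetoid f)) where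
  toFun σ := Quotient.congr σ fun _ _ =>
    (sameCycle_apply_apply_iff_of_commute (Subgroup.mem_centralizer_singleton_iff.mp σ.2)).symm
  map_one' := by
    ext x
    induction x using Quotient.ind
    rfl
  map_mul' σ τ := by
    ext x
    induction x using Quotient.ind
    rfl

theorem centralizerToOrbitPerm_mk (f : Perm α) (σ : Subgroup.centralizer {f}) (x : α) :
    centralizerToOrbitPerm f σ (Quotient.mk _ x) = Quotient.mk _ ((σ : Perm α) x) :=
  rfl

theorem centralizerToOrbitPerm_zpow_mk (f : Perm α) (σ : Subgroup.centralizer {f}) (k : ℤ)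
    (x : α) :
    (centralizerToOrbitPerm f σ ^ k) (Quotient.mk _ x) = Quotient.mk _ (((σ : Perm α) ^ k) x) := by
  rw [← map_zpow]
  rfl

end Equiv.Perm

open Equiv Equiv.Perm

theorem RibbonGraph.s_zpow_apply {V H : Type*} (G : RibbonGraph V H) (k : ℤ) (h : H) :
    G.s ((G.ρ ^ k) h) = G.s h :=
  apply_zpow_apply_eq_of_forall_apply_eq G.s_ρ k h

namespace AFBG

variable {V H : Type*} (Γ : AFBG V H) {ν : Perm H}

theorem nakayama_zpow_apply (hν : ∀ h, ν h = (Γ.ρ ^ Γ.d (Γ.s h)) h) (k : ℤ) (h : H) :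
    (ν ^ k) h = (Γ.ρ ^ (k * Γ.d (Γ.s h))) h := by
  have hν_zpow : ∀ m : ℤ, ν ((Γ.ρ ^ m) h) = (Γ.ρ ^ (m + Γ.d (Γ.s h))) h := fun m => by
    rw [hν, Γ.s_zpow_apply, ← mul_apply, ← zpow_add, add_comm]
  induction k using Int.induction_on with
  | zero => simp
  | succ k ih => rw [add_comm, zpow_one_add, mul_apply, ih, hν_zpow, add_comm (1 : ℤ), add_one_mul]
  | pred k ih =>
    rw [sub_eq_neg_add, zpow_add, zpow_neg_one, mul_apply, inv_eq_iff_eq, ih, hν_zpow]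
    congr 2
    ring

theorem s_eq_of_sameCycle (hν : ∀ h, ν h = (Γ.ρ ^ Γ.d (Γ.s h)) h) {a b : H}
    (hab : ν.SameCycle a b) : Γ.s a = Γ.s b := by
  obtain ⟨k, rfl⟩ := hab
  rw [Γ.nakayama_zpow_apply hν, Γ.s_zpow_apply]

theorem not_sameCycle_ι (hν : ∀ h, ν h = (Γ.ρ ^ Γ.d (Γ.s h)) h) (h : H) :
    ¬ ν.SameCycle h (Γ.ι h) := by
  rintro ⟨k, hk⟩
  exact Γ.ax_ii h k (by rwa [Γ.nakayama_zpow_apply hν] at hk)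

theorem ρ_mem_centralizer (hν : ∀ h, ν h = (Γ.ρ ^ Γ.d (Γ.s h)) h) :
    Γ.ρ ∈ Subgroup.centralizer {ν} := by
  refine Subgroup.mem_centralizer_singleton_iff.mpr (Equiv.ext fun h => ?_)
  rw [mul_apply, mul_apply, hν, hν, Γ.s_ρ, ← mul_apply, ← mul_apply,
    (Commute.self_zpow Γ.ρ _).eq]

theorem ι_mem_centralizer (hν : ∀ h, ν h = (Γ.ρ ^ Γ.d (Γ.s h)) h) :
    Function.Involutive.toPerm Γ.ι Γ.ι_invol ∈ Subgroup.centralizer {ν} := by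
  refine Subgroup.mem_centralizer_singleton_iff.mpr (Equiv.ext fun h => ?_)
  change Γ.ι (ν h) = ν (Γ.ι h)
  rw [hν, hν]
  exact Γ.ax_i h

/-- The reduced form `Γ_red = (V, H/⟨ν⟩, s', ι', ρ')` of `Γ`. -/
def reducedForm (hν : ∀ h, ν h = (Γ.ρ ^ Γ.d (Γ.s h)) h) :
    RibbonGraph V (Quotient (permOrbitSetoid ν)) where
  s := Quotient.lift Γ.s fun _ _ => Γ.s_eq_of_sameCycle hν
  ι := centralizerToOrbitPerm ν ⟨_, Γ.ι_mem_centralizer hν⟩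
  ρ := centralizerToOrbitPerm ν ⟨Γ.ρ, Γ.ρ_mem_centralizer hν⟩
  ι_invol x := by
    induction x using Quotient.ind with
    | _ h => exact congrArg (Quotient.mk _) (Γ.ι_invol h)
  ι_ne x := by
    induction x using Quotient.ind with
    | _ h => exact fun hx => Γ.not_sameCycle_ι hν h (SameCycle.symm (Quotient.exact hx))
  s_surj v := (Γ.s_surj v).imp' (Quotient.mk _) fun _ hh => hh
  s_ρ x := by
    induction x using Quotient.ind with
    | _ h => exact Γ.s_ρ h
  ρ_trans x y := by
    induction x, y using Quotient.ind₂ with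
    | _ a b =>
      intro hab
      obtain ⟨k, hk⟩ := Γ.ρ_trans a b hab
      exact ⟨k, by rw [centralizerToOrbitPerm_zpow_mk, ← hk]⟩

end AFBG

/-- for an AFBG with Nakayama map ν, the maps s'([h]) = s(h) and
ρ'([h]) = [ρ(h)] are well defined on H/⟨ν⟩, ρ' is a bijection, and for every
vertex v the set of ⟨ν⟩-orbits contained in s⁻¹(v) is a single ⟨ρ'⟩-orbit.
Consequently the reduced form Γ_red = (V, H/⟨ν⟩, s', ι', ρ') is again a
ribbon graph. -/
theorem stmt6 {V H : Type*} (Γ : AFBG V H)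
    (ν : Equiv.Perm H) (hν : ∀ h, ν h = (Γ.ρ ^ Γ.d (Γ.s h)) h) :
    ∃ (s' : Quotient (permOrbitSetoid ν) → V)
      (ρ' : Equiv.Perm (Quotient (permOrbitSetoid ν))),
      (∀ h : H, s' (Quotient.mk (permOrbitSetoid ν) h) = Γ.s h) ∧
      (∀ h : H, ρ' (Quotient.mk (permOrbitSetoid ν) h)
          = Quotient.mk (permOrbitSetoid ν) (Γ.ρ h)) ∧
      (∀ (v : V) (x y : Quotient (permOrbitSetoid ν)),
          s' x = v → s' y = v → ∃ k : ℤ, (ρ' ^ k) x = y) ∧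
      ∃ G : RibbonGraph V (Quotient (permOrbitSetoid ν)),
        G.s = s' ∧
        (∀ h : H, G.ι (Quotient.mk (permOrbitSetoid ν) h)
            = Quotient.mk (permOrbitSetoid ν) (Γ.ι h)) ∧
        (∀ x, G.ρ x = ρ' x) := by
  let G := Γ.reducedForm hν
  refine ⟨G.s, G.ρ, fun _ => rfl, centralizerToOrbitPerm_mk ν _, ?_, G, rfl,
    centralizerToOrbitPerm_mk ν _, fun _ => rfl⟩
  exact fun _ x y hx hy => G.ρ_trans x y (hx.trans hy.symm)
end

section
/- Let (Γ, d) be an admissible fractional Brauer graph such that every fiber s⁻¹(v) is finite, with Nakayama map ν, and let Γ_red be its reduced form. Then for every vertex v, the number of ⟨ν⟩-orbits contained in s⁻¹(v) (i.e. the valency val_{Γ_red}(v)) equals gcd(val(v), d(v)), where val(v) = |s⁻¹(v)|. In particular val_{Γ_red}(v) divides d(v), so every vertex multiplicity d(v)/val_{Γ_red}(v) of (Γ_red, d) is a positive integer; that is, (Γ_red, d) is a Brauer graph. -/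
/-! The fiber of `v` is the `⟨ρ⟩`-orbit of any `h₀` over `v`, so `k ↦ ρ^k h₀` identifies it with
`ℤ/n`, where `n` is the period of `h₀` under `ρ` (and `n = 0`, i.e. the fiber is `ℤ`, if `h₀` is not
periodic). On this fiber `ν` acts as `ρ^d`, i.e. as translation by `d` on `ℤ/n`, whose orbits are the
cosets of `dℤ/n = gcd(n, d)ℤ/n`; there are `gcd(n, d)` of them. -/

open Equiv

namespace Equiv.Perm

variable {α β : Type*}

theorem apply_zpow_apply_eq {f : α → β} {σ : Perm α} (h : ∀ x, f (σ x) = f x) (k : ℤ) (x : α) :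
    f ((σ ^ k) x) = f x := by
  induction k using Int.induction_on generalizing x with
  | zero => rfl
  | succ k ih => rw [zpow_add_one, mul_apply, ih, h]
  | pred k ih => rw [zpow_sub_one, mul_apply, ih, ← h (σ⁻¹ x), coe_inv, apply_symm_apply]

theorem zpow_apply_eq_zpow_apply_of_eqOn_fiber {f : α → β} {ν σ : Perm α}
    (hσ : ∀ x, f (σ x) = f x) {b : β} (hνσ : ∀ x, f x = b → ν x = σ x) (k : ℤ) {x : α}
    (hx : f x = b) : (ν ^ k) x = (σ ^ k) x := by
  induction k using Int.induction_on generalizing x with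
  | zero => rfl
  | succ k ih => rw [zpow_add_one, zpow_add_one, mul_apply, mul_apply, hνσ x hx, ih (by rwa [hσ])]
  | pred k ih =>
    have hy : f (σ⁻¹ x) = b := by rw [← hσ, coe_inv, apply_symm_apply, hx]
    have hνy : ν⁻¹ x = σ⁻¹ x := by rw [inv_eq_iff_eq, hνσ _ hy, coe_inv, apply_symm_apply]
    rw [zpow_sub_one, zpow_sub_one, mul_apply, mul_apply, hνy, ih hy]

theorem zpow_apply_eq_zpow_apply_iff (σ : Perm α) (x : α) (p q : ℤ) :
    (σ ^ p) x = (σ ^ q) x ↔ (p : ZMod (MulAction.period σ x)) = q := by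
  rw [ZMod.intCast_eq_intCast_iff_dvd_sub, ← MulAction.zpow_smul_eq_iff_period_dvd, Perm.smul_def,
    ← eq_inv_iff_eq, ← mul_apply, ← zpow_neg, ← zpow_add, neg_add_eq_sub, eq_comm]

end Equiv.Perm

theorem exists_intCast_add_mul_eq_iff (n : ℕ) (d p q : ℤ) :
    (∃ k : ℤ, ((p + d * k : ℤ) : ZMod n) = q) ↔ (p : ZMod (Int.gcd n d)) = q := by
  simp only [ZMod.intCast_eq_intCast_iff_dvd_sub, Int.coe_gcd, gcd_dvd_iff_exists]
  constructor
  · rintro ⟨k, t, ht⟩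
    exact ⟨t, k, by linarith⟩
  · rintro ⟨t, k, hk⟩
    exact ⟨k, t, by linarith⟩

theorem Set.ncard_range_of_eq_iff_intCast_eq {X : Type*} {φ : ℤ → X} {m : ℕ}
    (h : ∀ p q, φ p = φ q ↔ (p : ZMod m) = q) : (Set.range φ).ncard = m := by
  have hψ : Function.Injective fun k : ZMod m => φ k.cast := by
    intro a b hab
    simpa only [h, ZMod.intCast_zmod_cast] using hab
  have hrange : Set.range (fun k : ZMod m => φ k.cast) = Set.range φ := by
    refine Set.ext fun y => ⟨fun ⟨k, hk⟩ => ⟨_, hk⟩, fun ⟨p, hp⟩ => ⟨p, ?_⟩⟩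
    rw [← hp, h, ZMod.intCast_zmod_cast]
  rw [← hrange, Set.ncard_range_of_injective hψ, Nat.card_zmod]

namespace RibbonGraph

variable {V H : Type*} (Γ : RibbonGraph V H)

theorem s_zpow_apply_s8 (k : ℤ) (h : H) : Γ.s ((Γ.ρ ^ k) h) = Γ.s h :=
  Γ.ρ.apply_zpow_apply_eq Γ.s_ρ k h

theorem fiber_eq_range (h₀ : H) : Γ.s ⁻¹' {Γ.s h₀} = Set.range fun k : ℤ => (Γ.ρ ^ k) h₀ := by
  ext h
  constructor
  · intro hh
    exact Γ.ρ_trans h₀ h (Eq.symm hh)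
  · rintro ⟨k, rfl⟩
    exact Γ.s_zpow_apply_s8 k h₀

theorem ncard_fiber (h₀ : H) : (Γ.s ⁻¹' {Γ.s h₀}).ncard = MulAction.period Γ.ρ h₀ := by
  rw [fiber_eq_range]
  exact Set.ncard_range_of_eq_iff_intCast_eq (Γ.ρ.zpow_apply_eq_zpow_apply_iff h₀)

theorem ncard_orbits_fiber_eq_gcd (ν : Perm H) (d : ℤ) (v : V)
    (hν : ∀ h, Γ.s h = v → ν h = (Γ.ρ ^ d) h) :
    {x : Quotient (permOrbitSetoid ν) |
        ∃ h : H, Γ.s h = v ∧ x = Quotient.mk (permOrbitSetoid ν) h}.ncard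
      = Int.gcd ((Γ.s ⁻¹' {v}).ncard : ℤ) d := by
  obtain ⟨h₀, rfl⟩ := Γ.s_surj v
  have hrange : {x : Quotient (permOrbitSetoid ν) |
      ∃ h : H, Γ.s h = Γ.s h₀ ∧ x = Quotient.mk (permOrbitSetoid ν) h}
        = Set.range fun k : ℤ => Quotient.mk (permOrbitSetoid ν) ((Γ.ρ ^ k) h₀) := by
    ext x
    constructor
    · rintro ⟨h, hh, rfl⟩
      obtain ⟨k, rfl⟩ := Γ.ρ_trans h₀ h hh.symm
      exact ⟨k, rfl⟩
    · rintro ⟨k, rfl⟩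
      exact ⟨_, Γ.s_zpow_apply_s8 k h₀, rfl⟩
  rw [hrange, ncard_fiber]
  refine Set.ncard_range_of_eq_iff_intCast_eq fun p q =>
    Quotient.eq.trans ((exists_congr fun k => ?_).trans (exists_intCast_add_mul_eq_iff _ d p q))
  rw [Perm.zpow_apply_eq_zpow_apply_of_eqOn_fiber (Γ.s_zpow_apply_s8 d) hν k (Γ.s_zpow_apply_s8 p h₀),
    ← zpow_mul, ← Perm.mul_apply, ← zpow_add, Perm.zpow_apply_eq_zpow_apply_iff, add_comm]

end RibbonGraph

theorem stmt8_general {V H : Type*} (Γ : AFBG V H)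
    (ν : Equiv.Perm H) (hν : ∀ h, ν h = (Γ.ρ ^ Γ.d (Γ.s h)) h) :
    ∀ v : V,
      Set.ncard {x : Quotient (permOrbitSetoid ν) |
          ∃ h : H, Γ.s h = v ∧ x = Quotient.mk (permOrbitSetoid ν) h}
        = Int.gcd ((Γ.s ⁻¹' {v}).ncard : ℤ) (Γ.d v) ∧
      ((Set.ncard {x : Quotient (permOrbitSetoid ν) |
          ∃ h : H, Γ.s h = v ∧ x = Quotient.mk (permOrbitSetoid ν) h} : ℤ) ∣ Γ.d v) ∧
      (0 < Set.ncard {x : Quotient (permOrbitSetoid ν) |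
          ∃ h : H, Γ.s h = v ∧ x = Quotient.mk (permOrbitSetoid ν) h}) := by
  intro v
  rw [Γ.ncard_orbits_fiber_eq_gcd ν (Γ.d v) v fun h hh => by rw [hν, hh]]
  exact ⟨rfl, Int.gcd_dvd_right _ _, Int.gcd_pos_of_ne_zero_right _ (Γ.d_pos v).ne'⟩

/-- for an AFBG with finite fibers and Nakayama map ν, the number
of ⟨ν⟩-orbits contained in s⁻¹(v) (the valency of v in the reduced form)
equals gcd(val(v), d(v)); in particular it divides d(v), so every vertex
multiplicity of the reduced form is a positive integer, i.e. the reduced form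
is a Brauer graph. -/
theorem stmt8 {V H : Type*} (Γ : AFBG V H)
    (hfin : ∀ v : V, (Γ.s ⁻¹' {v}).Finite)
    (ν : Equiv.Perm H) (hν : ∀ h, ν h = (Γ.ρ ^ Γ.d (Γ.s h)) h) :
    ∀ v : V,
      Set.ncard {x : Quotient (permOrbitSetoid ν) |
          ∃ h : H, Γ.s h = v ∧ x = Quotient.mk (permOrbitSetoid ν) h}
        = Int.gcd ((Γ.s ⁻¹' {v}).ncard : ℤ) (Γ.d v) ∧
      ((Set.ncard {x : Quotient (permOrbitSetoid ν) |
          ∃ h : H, Γ.s h = v ∧ x = Quotient.mk (permOrbitSetoid ν) h} : ℤ) ∣ Γ.d v) ∧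
      (0 < Set.ncard {x : Quotient (permOrbitSetoid ν) |
          ∃ h : H, Γ.s h = v ∧ x = Quotient.mk (permOrbitSetoid ν) h}) :=
  stmt8_general Γ ν hν
end

section
/- Let Γ = (V, H, s, ι, ρ) be a ribbon graph with every fiber s⁻¹(v) finite, n_v = val(v), fix a cutting {φ_v} and r ≥ 1, and let Γ^{(r)} be the r-fold cover. Let d : V → ℤ_{>0} be given by d(v) = n_v (so Γ with multiplicity function m ≡ 1). Then (Γ^{(r)}, d) is an admissible fractional Brauer graph: axioms (i) ι̃(ρ̃^{d(s̃(x))}(x)) = ρ̃^{d(s̃(ι̃(x)))}(ι̃(x)) and (ii) ρ̃^{n·d(s̃(x))}(x) ≠ ι̃(x) for every integer n hold for every half-edge x of Γ^{(r)}; its Nakayama map satisfies ν̃(h, j) = (h, j+1); and every ⟨ν̃⟩-orbit on H × ℤ/rℤ has exactly r elements. -/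
/-- A cutting of a ribbon graph with finite fibers: for each vertex `v` a
bijection `φ v : Fin (n v) → s⁻¹(v)` enumerating the fiber compatibly with
`ρ`, i.e. `ρ(φ v i) = φ v (i+1)` for `i + 1 < n v`. -/
structure Cutting {V H : Type*} (Γ : RibbonGraph V H) where
  n : V → ℕ
  φ : ∀ v, Fin (n v) → H
  φ_s : ∀ v i, Γ.s (φ v i) = v
  φ_inj : ∀ v, Function.Injective (φ v)
  φ_surj : ∀ v h, Γ.s h = v → ∃ i, φ v i = h
  φ_ρ : ∀ (v) (i : Fin (n v)) (hi : (i : ℕ) + 1 < n v),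
      Γ.ρ (φ v i) = φ v ⟨(i : ℕ) + 1, hi⟩

/-- The index of a half-edge in the enumeration of its fiber. -/
noncomputable def Cutting.idx {V H : Type*} {Γ : RibbonGraph V H}
    (C : Cutting Γ) (h : H) : Fin (C.n (Γ.s h)) :=
  (C.φ_surj (Γ.s h) h rfl).choose

/-- The permutation `ρ̃` of the cover with half-edge set `H × J`
(for `J = ℤ/rℤ` or `J = ℤ`): with `s(h) = v` and `h = φ_v(i)`,
`ρ̃(h, j) = (φ_v(i+1), j)` if `i < n_v − 1`, and
`ρ̃(h, j) = (φ_v(0), j+1)` if `i = n_v − 1`. -/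
noncomputable def coverRho {V H : Type*} {Γ : RibbonGraph V H} (C : Cutting Γ)
    {J : Type*} [Add J] [One J] : H × J → H × J :=
  fun x =>
    if hlt : (C.idx x.1 : ℕ) + 1 < C.n (Γ.s x.1) then
      (C.φ (Γ.s x.1) ⟨(C.idx x.1 : ℕ) + 1, hlt⟩, x.2)
    else
      (C.φ (Γ.s x.1) ⟨0, Nat.lt_of_le_of_lt (Nat.zero_le _) (C.idx x.1).isLt⟩, x.2 + 1)

/-!
Going once around the fiber of `h` under `ρ̃` crosses the cut `φ_v(n_v - 1) → φ_v(0)` exactly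
once, so `ρ̃ ^ n_v` is the deck translation `(h, j) ↦ (h, j + 1)` on half-edges over `v`.
Hence `ν̃` is this translation; axiom (i) holds because `ι̃` commutes with it, axiom (ii)
because its powers fix the first coordinate while `ι` has no fixed points, and the
`⟨ν̃⟩`-orbits are the fibers `{h} × ℤ/rℤ`.
-/

namespace Cutting

variable {V H : Type*} {Γ : RibbonGraph V H} (C : Cutting Γ)

lemma φ_congr {v w : V} (hvw : v = w) (i : Fin (C.n v)) :
    C.φ v i = C.φ w (Fin.cast (congrArg C.n hvw) i) := by
  subst hvw; rfl

lemma φ_idx (h : H) : C.φ (Γ.s h) (C.idx h) = h :=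
  (C.φ_surj (Γ.s h) h rfl).choose_spec

lemma idx_φ_val (v : V) (i : Fin (C.n v)) : (C.idx (C.φ v i) : ℕ) = i := by
  have h := C.φ_idx (C.φ v i)
  rw [C.φ_congr (C.φ_s v i)] at h
  exact congrArg Fin.val (C.φ_inj v h)

end Cutting

section CoverRho

variable {V H : Type*} {Γ : RibbonGraph V H} (C : Cutting Γ) {J : Type*} [Add J] [One J]

lemma coverRho_φ_of_lt (v : V) {i : ℕ} (hi : i + 1 < C.n v) (j : J) :
    coverRho C (C.φ v ⟨i, by omega⟩, j) = (C.φ v ⟨i + 1, hi⟩, j) := by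
  have hs := C.φ_s v ⟨i, by omega⟩
  have hidx := C.idx_φ_val v ⟨i, by omega⟩
  rw [coverRho, dif_pos (by rw [hidx, hs]; exact hi), C.φ_congr hs]
  congr 2
  exact Fin.ext (by simp [hidx])

lemma coverRho_φ_last (v : V) {i : ℕ} (hi : i < C.n v) (hlast : ¬ i + 1 < C.n v) (j : J) :
    coverRho C (C.φ v ⟨i, hi⟩, j) = (C.φ v ⟨0, by omega⟩, j + 1) := by
  have hs := C.φ_s v ⟨i, hi⟩
  rw [coverRho, dif_neg (by rw [C.idx_φ_val, hs]; exact hlast), C.φ_congr hs]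
  rfl

lemma coverRho_iterate_φ (v : V) {i k : ℕ} (hik : i + k < C.n v) (j : J) :
    (coverRho C)^[k] (C.φ v ⟨i, by omega⟩, j) = (C.φ v ⟨i + k, hik⟩, j) := by
  induction k generalizing i with
  | zero => rfl
  | succ k ih =>
    rw [Function.iterate_succ_apply, coverRho_φ_of_lt C v (by omega), ih (by omega)]
    simp only [Nat.add_right_comm i 1 k, Nat.add_assoc]

lemma coverRho_iterate_n_φ (v : V) (i : Fin (C.n v)) (j : J) :
    (coverRho C)^[C.n v] (C.φ v i, j) = (C.φ v i, j + 1) := by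
  obtain ⟨i, hi⟩ := i
  have hsplit : (coverRho C (J := J))^[C.n v] =
      (coverRho C)^[i] ∘ coverRho C ∘ (coverRho C)^[C.n v - 1 - i] := by
    rw [← Function.iterate_succ', ← Function.iterate_add]
    congr 1
    omega
  have to_last := coverRho_iterate_φ C v (i := i) (k := C.n v - 1 - i) (by omega) j
  have from_first := coverRho_iterate_φ C v (i := 0) (k := i) (by omega) (j + 1)
  simp only [Nat.zero_add] at from_first
  rw [hsplit, Function.comp_apply, Function.comp_apply, to_last,
    coverRho_φ_last C v _ (by omega), from_first]

lemma coverRho_iterate_n (h : H) (j : J) :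
    (coverRho C)^[C.n (Γ.s h)] (h, j) = (h, j + 1) := by
  have h_around := coverRho_iterate_n_φ C (Γ.s h) (C.idx h) j
  rwa [C.φ_idx] at h_around

end CoverRho

section Translation

variable {α G : Type*} [AddGroup G]

lemma Equiv.Perm.pow_apply_of_forall_apply_eq_add_snd (σ : Equiv.Perm (α × G)) (p : α → Prop)
    (g : G) (hσ : ∀ y, p y.1 → σ y = (y.1, y.2 + g)) (n : ℕ) (y : α × G) (hy : p y.1) :
    (σ ^ n) y = (y.1, y.2 + n • g) := by
  induction n with
  | zero => simp
  | succ n ih =>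
    rw [pow_succ', Equiv.Perm.mul_apply, ih, hσ (y.1, y.2 + n • g) hy, succ_nsmul, add_assoc]

lemma Equiv.Perm.zpow_apply_of_forall_apply_eq_add_snd (σ : Equiv.Perm (α × G)) (p : α → Prop)
    (g : G) (hσ : ∀ y, p y.1 → σ y = (y.1, y.2 + g)) (k : ℤ) (y : α × G) (hy : p y.1) :
    (σ ^ k) y = (y.1, y.2 + k • g) := by
  obtain ⟨n, rfl | rfl⟩ := Int.eq_nat_or_neg k
  · rw [zpow_natCast, natCast_zsmul, σ.pow_apply_of_forall_apply_eq_add_snd p g hσ n y hy]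
  · rw [zpow_neg, zpow_natCast, Equiv.Perm.inv_eq_iff_eq,
      σ.pow_apply_of_forall_apply_eq_add_snd p g hσ n (y.1, y.2 + -(n : ℤ) • g) hy]
    simp

lemma ncard_zpow_orbit_of_forall_apply_eq_add_one {r : ℕ} (σ : Equiv.Perm (α × ZMod r))
    (hσ : ∀ y, σ y = (y.1, y.2 + 1)) (x : α × ZMod r) :
    {y | ∃ k : ℤ, (σ ^ k) x = y}.ncard = r := by
  have horbit : {y | ∃ k : ℤ, (σ ^ k) x = y} = Set.range fun c : ZMod r => (x.1, c) := by
    ext y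
    simp only [σ.zpow_apply_of_forall_apply_eq_add_snd (fun _ => True) 1 (fun y _ => hσ y) _ x
      trivial, zsmul_one, Set.mem_ofPred_eq, Set.mem_range]
    constructor
    · rintro ⟨k, rfl⟩
      exact ⟨_, rfl⟩
    · rintro ⟨c, rfl⟩
      obtain ⟨k, hk⟩ := ZMod.intCast_surjective (c - x.2)
      exact ⟨k, by rw [hk, add_sub_cancel]⟩
  rw [horbit, Set.ncard_range_of_injective (Prod.mk_right_injective x.1), Nat.card_zmod]

end Translation

theorem stmt14_general {V H : Type*} (Γ : RibbonGraph V H) (C : Cutting Γ)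
    (r : ℕ)
    (ρt : Equiv.Perm (H × ZMod r)) (hρt : ∀ x, ρt x = coverRho C x)
    (νt : Equiv.Perm (H × ZMod r))
    (hνt : ∀ x : H × ZMod r, νt x = (ρt ^ (C.n (Γ.s x.1) : ℤ)) x) :
    (∀ x : H × ZMod r,
      ((Γ.ι ((ρt ^ (C.n (Γ.s x.1) : ℤ)) x).1, ((ρt ^ (C.n (Γ.s x.1) : ℤ)) x).2)
          : H × ZMod r)
        = (ρt ^ (C.n (Γ.s (Γ.ι x.1)) : ℤ)) (Γ.ι x.1, x.2)) ∧
    (∀ (x : H × ZMod r) (m : ℤ),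
      (ρt ^ (m * (C.n (Γ.s x.1) : ℤ))) x ≠ ((Γ.ι x.1, x.2) : H × ZMod r)) ∧
    (∀ (h : H) (j : ZMod r), νt (h, j) = (h, j + 1)) ∧
    (∀ x : H × ZMod r,
      Set.ncard {y : H × ZMod r | ∃ k : ℤ, (νt ^ k) x = y} = r) := by
  have hρt_pow_n : ∀ x : H × ZMod r, (ρt ^ (C.n (Γ.s x.1) : ℤ)) x = (x.1, x.2 + 1) := by
    intro x
    rw [zpow_natCast, Equiv.Perm.coe_pow, funext hρt]
    exact coverRho_iterate_n C x.1 x.2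
  have hνt_shift : ∀ x : H × ZMod r, νt x = (x.1, x.2 + 1) :=
    fun x => (hνt x).trans (hρt_pow_n x)
  refine ⟨fun x => by rw [hρt_pow_n, hρt_pow_n (Γ.ι x.1, x.2)], fun x m hx => ?_,
    fun h j => hνt_shift (h, j), ncard_zpow_orbit_of_forall_apply_eq_add_one νt hνt_shift⟩
  rw [zpow_mul', (ρt ^ (C.n (Γ.s x.1) : ℤ)).zpow_apply_of_forall_apply_eq_add_snd
    (fun h => Γ.s h = Γ.s x.1) 1 (fun y hy => hy ▸ hρt_pow_n y) m x rfl] at hx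
  exact Γ.ι_ne x.1 (congrArg Prod.fst hx).symm

/-- with d(v) = n_v = val(v) (multiplicity function m ≡ 1), the
r-fold cover (Γ^{(r)}, d) is an admissible fractional Brauer graph: AFBG
axioms (i) and (ii) hold for every half-edge x of Γ^{(r)}, its Nakayama map
satisfies ν̃(h, j) = (h, j+1), and every ⟨ν̃⟩-orbit on H × ℤ/rℤ has exactly r
elements. Here ρt is the permutation ρ̃ of the cover and νt its Nakayama
map. -/
theorem stmt14 {V H : Type*} (Γ : RibbonGraph V H) (C : Cutting Γ)
    (r : ℕ) (hr : 1 ≤ r)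
    (ρt : Equiv.Perm (H × ZMod r)) (hρt : ∀ x, ρt x = coverRho C x)
    (νt : Equiv.Perm (H × ZMod r))
    (hνt : ∀ x : H × ZMod r, νt x = (ρt ^ (C.n (Γ.s x.1) : ℤ)) x) :
    (∀ x : H × ZMod r,
      ((Γ.ι ((ρt ^ (C.n (Γ.s x.1) : ℤ)) x).1, ((ρt ^ (C.n (Γ.s x.1) : ℤ)) x).2)
          : H × ZMod r)
        = (ρt ^ (C.n (Γ.s (Γ.ι x.1)) : ℤ)) (Γ.ι x.1, x.2)) ∧
    (∀ (x : H × ZMod r) (m : ℤ),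
      (ρt ^ (m * (C.n (Γ.s x.1) : ℤ))) x ≠ ((Γ.ι x.1, x.2) : H × ZMod r)) ∧
    (∀ (h : H) (j : ZMod r), νt (h, j) = (h, j + 1)) ∧
    (∀ x : H × ZMod r,
      Set.ncard {y : H × ZMod r | ∃ k : ℤ, (νt ^ k) x = y} = r) :=
  stmt14_general Γ C r ρt hρt νt hνt
end

section
/- Let Γ = (V, H, s, ι, ρ) be a ribbon graph with every fiber s⁻¹(v) finite, n_v = val(v), fix a cutting {φ_v}, and define the ℤ-cover Γ^{ℤ} = (V, H × ℤ, s̃, ι̃, ρ̃) by s̃(h, j) = s(h), ι̃(h, j) = (ι(h), j), and for s(h) = v with h = φ_v(i): ρ̃(h, j) = (φ_v(i+1), j) if i < n_v − 1, and ρ̃(h, j) = (φ_v(0), j+1) if i = n_v − 1. Then Γ^{ℤ} is a ribbon graph (ρ̃ is a bijection whose orbits are exactly the fibers s̃⁻¹(v) = s⁻¹(v) × ℤ). Moreover, if d(v) = n_v for every v, then (Γ^{ℤ}, d) satisfies the AFBG axioms, its Nakayama map satisfies ν̃^{k}(h, j) = (h, j+k) for every integer k, and the ⟨ν̃⟩-action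 on H × ℤ is free: ν̃^{k}(x) = x implies k = 0. -/
/-!
Each fiber `s⁻¹(v) × ℤ` of the cover is a helix: the map `t ↦ (φ_v(t mod n_v), t div n_v)`
identifies `ℤ` with it and turns `ρ̃` into `t ↦ t + 1`. Hence `ρ̃^k` is translation by `k`,
`ρ̃` acts transitively on each fiber, and `ν̃ = ρ̃^{n_v}` shifts the sheet index by one. So
`ν̃^k(h, j) = (h, j + k)`, which makes the action free, and the AFBG axioms reduce to `ι̃`
commuting with this shift and having no fixed points.
-/

theorem Equiv.Perm.zpow_apply_of_apply_eq_add_one {α : Type*} (σ : Equiv.Perm α) {f : ℤ → α}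
    (hf : ∀ t, σ (f t) = f (t + 1)) (k t : ℤ) : (σ ^ k) (f t) = f (t + k) := by
  induction k using Int.induction_on generalizing t with
  | zero => simp
  | succ k ih => rw [zpow_add_one, Equiv.Perm.mul_apply, hf, ih, add_right_comm, add_assoc]
  | pred k ih =>
    have hinv : σ⁻¹ (f t) = f (t - 1) := by
      rw [Equiv.Perm.inv_eq_iff_eq, hf, sub_add_cancel]
    rw [zpow_sub_one, Equiv.Perm.mul_apply, hinv, ih]
    ring_nf

namespace Cutting

variable {V H : Type*} {Γ : RibbonGraph V H} (C : Cutting Γ)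

lemma val_idx_φ {v : V} (i : Fin (C.n v)) : (C.idx (C.φ v i) : ℕ) = i := by
  have key : ∀ w (hw : w = v) (k : Fin (C.n w)), C.φ w k = C.φ v i → (k : ℕ) = i := by
    rintro w rfl k hk
    rw [C.φ_inj w hk]
  exact key _ (C.φ_s v i) _ (C.φ_idx _)

noncomputable def height (x : H × ℤ) : ℤ :=
  C.idx x.1 + C.n (Γ.s x.1) * x.2

noncomputable def helix (v : V) (hv : 0 < C.n v) (t : ℤ) : H × ℤ :=
  (C.φ v ⟨(t % C.n v).toNat, by
      have := Int.emod_lt_of_pos t (Int.natCast_pos.mpr hv)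
      omega⟩, t / C.n v)

lemma helix_congr {v w : V} (hvw : v = w) {t u : ℤ} (htu : t = u) (hv : 0 < C.n v)
    (hw : 0 < C.n w) : C.helix v hv t = C.helix w hw u := by
  subst hvw htu; rfl

lemma helix_add_mul {v : V} (hv : 0 < C.n v) (a : ℕ) (ha : a < C.n v) (q : ℤ) :
    C.helix v hv (a + C.n v * q) = (C.φ v ⟨a, ha⟩, q) := by
  have hn : (0 : ℤ) < C.n v := Int.natCast_pos.mpr hv
  have hrem : ((a : ℤ) + C.n v * q) % C.n v = a := by
    rw [Int.add_mul_emod_self_left, Int.emod_eq_of_lt (by positivity) (by exact_mod_cast ha)]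
  have hquot : ((a : ℤ) + C.n v * q) / C.n v = q := by
    rw [Int.add_mul_ediv_left _ _ hn.ne', Int.ediv_eq_zero_of_lt (by positivity)
      (by exact_mod_cast ha), zero_add]
  simp only [helix, hrem, hquot, Int.toNat_natCast]

lemma helix_height {v : V} (hv : 0 < C.n v) (x : H × ℤ) (hx : Γ.s x.1 = v) :
    C.helix v hv (C.height x) = x := by
  obtain ⟨h, j⟩ := x
  subst hx
  exact (C.helix_add_mul hv _ (C.idx h).isLt j).trans (by rw [Fin.eta, C.φ_idx])

lemma s_helix {v : V} (hv : 0 < C.n v) (t : ℤ) : Γ.s (C.helix v hv t).1 = v :=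
  C.φ_s v _

lemma height_helix {v : V} (hv : 0 < C.n v) (t : ℤ) : C.height (C.helix v hv t) = t := by
  have hn : (0 : ℤ) < C.n v := Int.natCast_pos.mpr hv
  have hidx : (C.idx (C.helix v hv t).1 : ℤ) = t % C.n v := by
    rw [helix, C.val_idx_φ, Int.toNat_of_nonneg (Int.emod_nonneg t hn.ne')]
  rw [height, hidx, C.s_helix]
  exact Int.emod_add_mul_ediv t _

lemma coverRho_eq_helix (x : H × ℤ) :
    coverRho C x = C.helix (Γ.s x.1) (C.idx x.1).pos (C.height x + 1) := by
  have hpos := (C.idx x.1).pos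
  unfold coverRho
  split_ifs with hlt
  · rw [height, add_right_comm, ← Nat.cast_succ, C.helix_add_mul hpos _ hlt]
  · have hlast : (C.idx x.1 : ℤ) + 1 = C.n (Γ.s x.1) := by
      have := (C.idx x.1).isLt
      omega
    rw [height, add_right_comm, hlast,
      show (C.n (Γ.s x.1) : ℤ) + C.n (Γ.s x.1) * x.2 = ((0 : ℕ) : ℤ) + C.n (Γ.s x.1) * (x.2 + 1)
        by ring, C.helix_add_mul hpos 0 hpos]

lemma coverRho_helix {v : V} (hv : 0 < C.n v) (t : ℤ) :
    coverRho C (C.helix v hv t) = C.helix v hv (t + 1) := by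
  rw [coverRho_eq_helix, height_helix]
  exact C.helix_congr (C.s_helix hv t) rfl _ _

variable {C} {ρ : Equiv.Perm (H × ℤ)} (hρ : ∀ x, ρ x = coverRho C x)
include hρ

lemma zpow_apply_eq_helix (k : ℤ) (x : H × ℤ) :
    (ρ ^ k) x = C.helix (Γ.s x.1) (C.idx x.1).pos (C.height x + k) := by
  conv_lhs => rw [← C.helix_height (C.idx x.1).pos x rfl]
  refine ρ.zpow_apply_of_apply_eq_add_one (fun t => ?_) k _
  rw [hρ, coverRho_helix]

lemma zpow_mul_n_apply (m : ℤ) (h : H) (j : ℤ) :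
    (ρ ^ (m * C.n (Γ.s h))) (h, j) = (h, j + m) := by
  rw [zpow_apply_eq_helix hρ]
  refine (C.helix_congr rfl ?_ _ _).trans (C.helix_height (C.idx h).pos (h, j + m) rfl)
  simp only [height]
  ring

lemma zpow_n_apply (h : H) (j : ℤ) : (ρ ^ (C.n (Γ.s h) : ℤ)) (h, j) = (h, j + 1) := by
  simpa using zpow_mul_n_apply hρ 1 h j

lemma exists_zpow_apply_eq {x y : H × ℤ} (hxy : Γ.s x.1 = Γ.s y.1) : ∃ k : ℤ, (ρ ^ k) x = y :=
  ⟨C.height y - C.height x, by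
    rw [zpow_apply_eq_helix hρ, add_sub_cancel, C.helix_height _ y hxy.symm]⟩

/-- The ℤ-cover `Γ^ℤ = (V, H × ℤ, s̃, ι̃, ρ̃)`. -/
def zCover : RibbonGraph V (H × ℤ) where
  s x := Γ.s x.1
  ι x := (Γ.ι x.1, x.2)
  ρ := ρ
  ι_invol x := by rw [Γ.ι_invol]
  ι_ne x hx := Γ.ι_ne x.1 (congrArg Prod.fst hx)
  s_surj v := let ⟨h, hh⟩ := Γ.s_surj v; ⟨(h, 0), hh⟩
  s_ρ x := by
    rw [← zpow_one ρ, zpow_apply_eq_helix hρ, C.s_helix]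
  ρ_trans _ _ := exists_zpow_apply_eq hρ

end Cutting

/-- the ℤ-cover Γ^{ℤ} = (V, H × ℤ, s̃, ι̃, ρ̃) is a ribbon graph
(ρ̃ is a bijection whose orbits are exactly the fibers s⁻¹(v) × ℤ). Moreover,
with d(v) = n_v = val(v), (Γ^{ℤ}, d) satisfies the AFBG axioms, its Nakayama
map satisfies ν̃^k(h, j) = (h, j+k) for every integer k, and the ⟨ν̃⟩-action
on H × ℤ is free. Here ρZ is the permutation ρ̃ and νZ its Nakayama map. -/
theorem stmt15 {V H : Type*} (Γ : RibbonGraph V H) (C : Cutting Γ)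
    (ρZ : Equiv.Perm (H × ℤ)) (hρZ : ∀ x, ρZ x = coverRho C x)
    (νZ : Equiv.Perm (H × ℤ))
    (hνZ : ∀ x : H × ℤ, νZ x = (ρZ ^ (C.n (Γ.s x.1) : ℤ)) x) :
    Function.Bijective (coverRho C : H × ℤ → H × ℤ) ∧
    (∃ G : RibbonGraph V (H × ℤ),
      (∀ x, G.s x = Γ.s x.1) ∧
      (∀ x : H × ℤ, G.ι x = (Γ.ι x.1, x.2)) ∧
      (∀ x, G.ρ x = coverRho C x)) ∧
    (∀ x : H × ℤ,
      ((Γ.ι ((ρZ ^ (C.n (Γ.s x.1) : ℤ)) x).1, ((ρZ ^ (C.n (Γ.s x.1) : ℤ)) x).2)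
          : H × ℤ)
        = (ρZ ^ (C.n (Γ.s (Γ.ι x.1)) : ℤ)) (Γ.ι x.1, x.2)) ∧
    (∀ (x : H × ℤ) (m : ℤ),
      (ρZ ^ (m * (C.n (Γ.s x.1) : ℤ))) x ≠ ((Γ.ι x.1, x.2) : H × ℤ)) ∧
    (∀ (h : H) (j k : ℤ), (νZ ^ k) ((h, j) : H × ℤ) = (h, j + k)) ∧
    (∀ (x : H × ℤ) (k : ℤ), (νZ ^ k) x = x → k = 0) := by
  have hνZ_pow (h : H) (j k : ℤ) : (νZ ^ k) (h, j) = (h, j + k) :=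
    νZ.zpow_apply_of_apply_eq_add_one (f := (h, ·))
      (fun t => (hνZ _).trans (Cutting.zpow_n_apply hρZ h t)) k j
  refine ⟨?_, ⟨C.zCover hρZ, fun _ => rfl, fun _ => rfl, hρZ⟩, ?_, ?_, hνZ_pow, ?_⟩
  · rw [show (coverRho C : H × ℤ → H × ℤ) = ρZ from funext fun x => (hρZ x).symm]
    exact ρZ.bijective
  · rintro ⟨h, j⟩
    rw [Cutting.zpow_n_apply hρZ, Cutting.zpow_n_apply hρZ]
  · rintro ⟨h, j⟩ m hm
    rw [Cutting.zpow_mul_n_apply hρZ] at hm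
    exact Γ.ι_ne h (congrArg Prod.fst hm).symm
  · rintro ⟨h, j⟩ k hk
    simpa using congrArg Prod.snd ((hνZ_pow h j k).symm.trans hk)
end
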